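/- For every probability measure ν on [0,∞) with cumulative distribution function F(s) = ν([0,s]), every α > 0 and every t > 0, the Kendall–Williamson transform satisfies Φ_ν(t) = α t^α ∫_0^{1/t} s^{α−1} F(s) ds. -/

import Mathlib

/-!
For `s ≥ 0` the kernel `(1 - (t s)^α)_+` is the integral of `α t^α u^(α-1)` over
`u ∈ [s, 1/t]`. Integrating against `ν(ds)` and exchanging the two integrals (Tonelli),
the inner integral becomes `ν {s | s ≤ u} = F u`.
-/

open MeasureTheory Set

theorem lintegral_setLIntegral_Ici_eq_lintegral_mul_measure_Iic {α : Type*} [MeasurableSpace α]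
    [TopologicalSpace α] [LinearOrder α] [OrderClosedTopology α] [OpensMeasurableSpace α]
    [SecondCountableTopology α] (ν μ : Measure α) [SFinite ν] [SFinite μ] {g : α → ENNReal}
    (hg : Measurable g) :
    ∫⁻ s, ∫⁻ u in Ici s, g u ∂μ ∂ν = ∫⁻ u, g u * ν (Iic u) ∂μ := by
  have hmeas : Measurable fun p : α × α => {p | p.1 ≤ p.2}.indicator (g ∘ Prod.snd) p :=
    (hg.comp measurable_snd).indicator (measurableSet_le measurable_fst measurable_snd)
  simp_rw [← lintegral_indicator measurableSet_Ici]
  rw [lintegral_lintegral_swap hmeas.aemeasurable]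
  congr 1 with u
  rw [← lintegral_indicator_const measurableSet_Iic]
  congr 1

theorem measure_Iic_eq_measure_Icc_of_measure_Iio {α : Type*} [LinearOrder α]
    [MeasurableSpace α] {ν : Measure α} {a : α} (h : ν (Iio a) = 0) (u : α) :
    ν (Iic u) = ν (Icc a u) := by
  rw [← measure_sdiff_null h]
  congr 1 with x
  simp

theorem integral_Icc_mul_rpow_sub_one {α s c : ℝ} (hα : 0 < α) (hsc : s ≤ c) :
    ∫ u in Icc s c, α * u ^ (α - 1) = c ^ α - s ^ α := by
  rw [integral_Icc_eq_integral_Ioc, ← intervalIntegral.integral_of_le hsc,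
    intervalIntegral.integral_const_mul, integral_rpow (Or.inl (by linarith)), sub_add_cancel]
  field_simp

theorem max_one_sub_mul_rpow_eq_integral_Icc {α t s : ℝ} (hα : 0 < α) (ht : 0 < t)
    (hs : 0 ≤ s) :
    max (1 - (t * s) ^ α) 0 = ∫ u in Icc s (1 / t), α * t ^ α * u ^ (α - 1) := by
  rcases le_or_gt s (1 / t) with hsc | hsc
  · have hts : (t * s) ^ α ≤ 1 :=
      Real.rpow_le_one (by positivity) (by rwa [le_div_iff₀' ht] at hsc) hα.le
    simp_rw [mul_comm α, mul_assoc]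
    rw [integral_const_mul, integral_Icc_mul_rpow_sub_one hα hsc, mul_sub,
      ← Real.mul_rpow ht.le hs, ← Real.mul_rpow ht.le (by positivity),
      mul_one_div_cancel ht.ne', Real.one_rpow, max_eq_left (by linarith)]
  · have hts : 1 ≤ (t * s) ^ α :=
      Real.one_le_rpow (by rw [div_lt_iff₀' ht] at hsc; exact hsc.le) hα.le
    rw [Icc_eq_empty hsc.not_ge, Measure.restrict_empty, integral_zero_measure,
      max_eq_right (by linarith)]

theorem ofReal_max_one_sub_mul_rpow_eq_lintegral {α t s : ℝ} (hα : 0 < α) (ht : 0 < t)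
    (hs : 0 ≤ s) :
    ENNReal.ofReal (max (1 - (t * s) ^ α) 0) =
      ∫⁻ u in Ici s, ENNReal.ofReal (α * t ^ α * u ^ (α - 1))
        ∂volume.restrict (Icc 0 (1 / t)) := by
  have hIcc : Ici s ∩ Icc 0 (1 / t) = Icc s (1 / t) := by
    ext u
    simp only [mem_inter_iff, mem_Ici, mem_Icc]
    exact ⟨fun h => ⟨h.1, h.2.2⟩, fun h => ⟨h.1, hs.trans h.1, h.2⟩⟩
  rw [Measure.restrict_restrict measurableSet_Ici, hIcc,
    max_one_sub_mul_rpow_eq_integral_Icc hα ht hs, ofReal_integral_eq_lintegral_ofReal]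
  · refine ((intervalIntegrable_iff' enorm_ne_top).1 ?_).mono_set Icc_subset_uIcc
    exact (intervalIntegral.intervalIntegrable_rpow' (by linarith)).const_mul _
  · filter_upwards [self_mem_ae_restrict measurableSet_Icc] with u hu
    have : 0 ≤ u := hs.trans hu.1
    positivity

theorem williamson_eq_integral_cdf
    (ν : Measure ℝ) [IsProbabilityMeasure ν] (hν : ν (Set.Iio 0) = 0)
    (α t : ℝ) (hα : 0 < α) (ht : 0 < t) :
    ∫ s, max (1 - (t * s) ^ α) 0 ∂ν
      = α * t ^ α * ∫ s in (0:ℝ)..(1 / t),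
          s ^ (α - 1) * (ν (Set.Icc 0 s)).toReal := by
  have hs_ae : ∀ᵐ s ∂ν, 0 ≤ s :=
    (measure_eq_zero_iff_ae_notMem.1 hν).mono fun _ h => not_lt.1 h
  have hF : Measurable fun u => (ν (Icc 0 u)).toReal := Monotone.measurable fun _ _ h =>
    ENNReal.toReal_mono (measure_ne_top ν _) (measure_mono (Icc_subset_Icc_right h))
  calc ∫ s, max (1 - (t * s) ^ α) 0 ∂ν
      = (∫⁻ s, ∫⁻ u in Ici s, ENNReal.ofReal (α * t ^ α * u ^ (α - 1))
          ∂volume.restrict (Icc 0 (1 / t)) ∂ν).toReal := by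
        rw [integral_eq_lintegral_of_nonneg_ae
          (ae_of_all _ fun s => le_max_right (1 - (t * s) ^ α) 0)
          (Measurable.aestronglyMeasurable (by fun_prop))]
        exact congrArg _ (lintegral_congr_ae (hs_ae.mono fun s hs =>
          ofReal_max_one_sub_mul_rpow_eq_lintegral hα ht hs))
    _ = (∫⁻ u in Icc 0 (1 / t),
          ENNReal.ofReal (α * t ^ α * u ^ (α - 1)) * ν (Iic u)).toReal := by
        rw [lintegral_setLIntegral_Ici_eq_lintegral_mul_measure_Iic _ _ (by fun_prop)]
    _ = ∫ u in Icc 0 (1 / t), α * t ^ α * (u ^ (α - 1) * (ν (Icc 0 u)).toReal) := by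
        rw [integral_eq_lintegral_of_nonneg_ae ?_ (Measurable.aestronglyMeasurable (by fun_prop))]
        · refine congrArg _ (setLIntegral_congr_fun measurableSet_Icc fun u _ => ?_)
          rw [← mul_assoc, ENNReal.ofReal_mul' ENNReal.toReal_nonneg,
            ENNReal.ofReal_toReal (measure_ne_top _ _),
            measure_Iic_eq_measure_Icc_of_measure_Iio hν]
        · filter_upwards [self_mem_ae_restrict measurableSet_Icc] with u hu
          have : 0 ≤ u := hu.1
          positivity
    _ = _ := by
        rw [integral_const_mul, integral_Icc_eq_integral_Ioc,
          intervalIntegral.integral_of_le (by positivity)]
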